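/- arXiv:2303.16296 — 5 statements merged into one kernel-verified Lean document; each statement's English description precedes it below -/
import Mathlib

section
/- For every p ≥ 1 and all x, y ∈ [0,1]^p with x + y ≠ 0, if x ≠ y then Δ_DML1(x,y) > 0 and Δ_DML2(x,y) > 0 (positivity of the Dice semimetric losses). -/
/-!
Both losses are `‖x - y‖₁` divided by a positive quantity:
`Δ_DML1 = ‖x - y‖₁ / ‖x + y‖₁` and `Δ_DML2 = ‖x - y‖₁ / (2‖x ⊙ y‖₁ + ‖x - y‖₁)`,
and `x ≠ y` makes the numerator positive.
-/

open Finset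

/-- The L¹ norm of a vector. -/
noncomputable def l1 {p : ℕ} (z : Fin p → ℝ) : ℝ := ∑ i, |z i|

/-- The first Dice semimetric loss. -/
noncomputable def DML1 {p : ℕ} (x y : Fin p → ℝ) : ℝ :=
  1 - (l1 (x + y) - l1 (x - y)) / l1 (x + y)

/-- The second Dice semimetric loss. -/
noncomputable def DML2 {p : ℕ} (x y : Fin p → ℝ) : ℝ :=
  1 - 2 * l1 (x * y) / (2 * l1 (x * y) + l1 (x - y))

section

variable {p : ℕ}

lemma l1_nonneg (z : Fin p → ℝ) : 0 ≤ l1 z :=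
  sum_nonneg fun i _ => abs_nonneg (z i)

lemma l1_pos {z : Fin p → ℝ} (hz : z ≠ 0) : 0 < l1 z := by
  obtain ⟨i, hi⟩ := Function.ne_iff.mp hz
  exact (abs_pos.mpr hi).trans_le (single_le_sum (fun j _ => abs_nonneg (z j)) (mem_univ i))

lemma l1_sub_pos {x y : Fin p → ℝ} (hne : x ≠ y) : 0 < l1 (x - y) :=
  l1_pos (sub_ne_zero.mpr hne)

lemma DML1_eq_div {x y : Fin p → ℝ} (h : l1 (x + y) ≠ 0) :
    DML1 x y = l1 (x - y) / l1 (x + y) := by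
  rw [DML1, sub_div, div_self h]
  ring

lemma DML2_eq_div {x y : Fin p → ℝ} (h : 2 * l1 (x * y) + l1 (x - y) ≠ 0) :
    DML2 x y = l1 (x - y) / (2 * l1 (x * y) + l1 (x - y)) := by
  rw [DML2, eq_div_iff h, sub_mul, div_mul_cancel₀ _ h]
  ring

lemma DML1_pos {x y : Fin p → ℝ} (hxy0 : x + y ≠ 0) (hne : x ≠ y) : 0 < DML1 x y := by
  have hsum := l1_pos hxy0
  rw [DML1_eq_div hsum.ne']
  exact div_pos (l1_sub_pos hne) hsum

lemma DML2_pos {x y : Fin p → ℝ} (hne : x ≠ y) : 0 < DML2 x y := by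
  have hdiff := l1_sub_pos hne
  have hden : 0 < 2 * l1 (x * y) + l1 (x - y) := by
    linarith [l1_nonneg (x * y)]
  rw [DML2_eq_div hden.ne']
  exact div_pos hdiff hden

end

theorem dml_positivity_general {p : ℕ} (x y : Fin p → ℝ)
    (hxy0 : x + y ≠ 0) (hne : x ≠ y) :
    0 < DML1 x y ∧ 0 < DML2 x y :=
  ⟨DML1_pos hxy0 hne, DML2_pos hne⟩

/-- Positivity of the Dice semimetric losses. -/
theorem dml_positivity {p : ℕ} (hp : 1 ≤ p) (x y : Fin p → ℝ)
    (hx : ∀ i, 0 ≤ x i ∧ x i ≤ 1) (hy : ∀ i, 0 ≤ y i ∧ y i ≤ 1)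
    (hxy0 : x + y ≠ 0) (hne : x ≠ y) :
    0 < DML1 x y ∧ 0 < DML2 x y :=
  dml_positivity_general x y hxy0 hne
end

section
/- For every p ≥ 1 and all nonzero a, b, c ∈ [0,1]^p, the relaxed triangle inequality Δ_DML1(a,c) ≤ ρ (Δ_DML1(a,b) + Δ_DML1(b,c)) holds with ρ = (1 + √5)/2. -/
open Finset

/-! On nonnegative vectors `DML1 x y = ‖x - y‖₁ / (‖x‖₁ + ‖y‖₁)`, and `(1 + √5) / 2` is the golden
ratio `φ`. Write `A, B, C` for the norms of `a, b, c`. If `A + B` and `B + C` are both at most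
`φ (A + C)`, the triangle inequality `‖a - c‖₁ ≤ ‖a - b‖₁ + ‖b - c‖₁` gives the claim. Otherwise,
say `A + B > φ (A + C)`, `b` is so much longer than `a` and `c` that the reverse triangle
inequalities `‖a - b‖₁ ≥ B - A`, `‖b - c‖₁ ≥ B - C` already push the right-hand side to at least
`1 ≥ DML1 a c`. -/

open Real
open scoped goldenRatio

lemma add_mul_add_le_goldenRatio_mul {A B C : ℝ} (hA : 0 ≤ A) (hC : 0 ≤ C)
    (hB : (φ - 1) * A + φ * C ≤ B) :
    (A + B) * (B + C) ≤ φ * (2 * B ^ 2 - 2 * A * C) := by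
  set t := B - ((φ - 1) * A + φ * C)
  have ht : 0 ≤ t := sub_nonneg.2 hB
  have h5 : 0 ≤ 5 - 2 * φ := by linarith [goldenRatio_lt_two]
  -- the expansion around the threshold `B = (φ - 1) A + φ C`, where `φ ^ 2 = φ + 1` makes the
  -- constant term a perfect square
  have key : φ * (2 * B ^ 2 - 2 * A * C) - (A + B) * (B + C) =
      (2 * φ - 1) * t ^ 2 + ((5 - 2 * φ) * A + (2 * φ + 3) * C) * t
        + (2 * φ + 1) * (C - (2 * φ - 3) * A) ^ 2 := by
    linear_combination (-10 * A ^ 2 * φ - 4 * A * C * φ - 2 * C ^ 2 * φ + 4 * A * B + 4 * B * C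
      + 13 * A ^ 2 + 10 * A * C + C ^ 2) * goldenRatio_sq
  have hφ := one_lt_goldenRatio
  linarith [mul_nonneg (by linarith : 0 ≤ 2 * φ - 1) (sq_nonneg t),
    mul_nonneg (by positivity : 0 ≤ (5 - 2 * φ) * A + (2 * φ + 3) * C) ht,
    mul_nonneg (by linarith : 0 ≤ 2 * φ + 1) (sq_nonneg (C - (2 * φ - 3) * A))]

lemma one_le_goldenRatio_mul_div_add_div {A B C u v : ℝ} (hA : 0 < A) (hC : 0 < C)
    (hu : B - A ≤ u) (hv : B - C ≤ v) (hfar : φ * (A + C) ≤ A + B) :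
    1 ≤ φ * (u / (A + B) + v / (B + C)) := by
  have hB : (φ - 1) * A + φ * C ≤ B := by linarith
  have hφ := one_lt_goldenRatio
  have hAB : 0 < A + B := by nlinarith
  have hBC : 0 < B + C := by nlinarith
  calc 1 ≤ φ * ((B - A) / (A + B) + (B - C) / (B + C)) := by
        rw [div_add_div _ _ hAB.ne' hBC.ne', ← mul_div_assoc, one_le_div (by positivity)]
        linarith [add_mul_add_le_goldenRatio_mul hA.le hC.le hB]
    _ ≤ φ * (u / (A + B) + v / (B + C)) := by gcongr

lemma div_le_goldenRatio_mul_div_add_div {A B C u v w : ℝ} (hA : 0 < A) (hB : 0 ≤ B)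
    (hC : 0 < C) (hu₀ : 0 ≤ u) (hv₀ : 0 ≤ v) (hu : B - A ≤ u) (hv : B - C ≤ v)
    (hw : w ≤ u + v) (hw' : w ≤ A + C) :
    w / (A + C) ≤ φ * (u / (A + B) + v / (B + C)) := by
  have hAC : 0 < A + C := by positivity
  have hw_le_one : w / (A + C) ≤ 1 := (div_le_one hAC).2 hw'
  by_cases hfarA : φ * (A + C) ≤ A + B
  · exact hw_le_one.trans (one_le_goldenRatio_mul_div_add_div hA hC hu hv hfarA)
  by_cases hfarC : φ * (A + C) ≤ B + C
  · have h := one_le_goldenRatio_mul_div_add_div hC hA hv hu (by linarith : φ * (C + A) ≤ C + B)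
    rw [add_comm C B, add_comm B A, add_comm (v / _)] at h
    exact hw_le_one.trans h
  push Not at hfarA hfarC
  calc w / (A + C) ≤ (u + v) / (A + C) := by gcongr
    _ = φ * (u / (φ * (A + C)) + v / (φ * (A + C))) := by field_simp
    _ ≤ φ * (u / (A + B) + v / (B + C)) := by gcongr

lemma l1_eq_norm {p : ℕ} (z : Fin p → ℝ) : l1 z = ‖WithLp.toLp 1 z‖ := by
  simp [l1, PiLp.norm_eq_of_L1]

lemma l1_add_of_nonneg {p : ℕ} {x y : Fin p → ℝ} (hx : ∀ i, 0 ≤ x i) (hy : ∀ i, 0 ≤ y i) :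
    l1 (x + y) = l1 x + l1 y := by
  simp only [l1, ← sum_add_distrib, Pi.add_apply]
  exact sum_congr rfl fun i _ => by
    rw [abs_of_nonneg (add_nonneg (hx i) (hy i)), abs_of_nonneg (hx i), abs_of_nonneg (hy i)]

lemma DML1_eq_of_nonneg {p : ℕ} {x y : Fin p → ℝ} (hx : ∀ i, 0 ≤ x i) (hy : ∀ i, 0 ≤ y i)
    (hxy : 0 < l1 x + l1 y) : DML1 x y = l1 (x - y) / (l1 x + l1 y) := by
  rw [DML1, l1_add_of_nonneg hx hy]
  field_simp
  ring

theorem dml1_relaxed_triangle_general {p : ℕ} (a b c : Fin p → ℝ)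
    (ha : ∀ i, 0 ≤ a i ∧ a i ≤ 1) (hb : ∀ i, 0 ≤ b i ∧ b i ≤ 1)
    (hc : ∀ i, 0 ≤ c i ∧ c i ≤ 1)
    (ha0 : a ≠ 0) (hc0 : c ≠ 0) :
    DML1 a c ≤ (1 + Real.sqrt 5) / 2 * (DML1 a b + DML1 b c) := by
  have hA : 0 < l1 a := by simpa [l1_eq_norm] using ha0
  have hC : 0 < l1 c := by simpa [l1_eq_norm] using hc0
  have hB : 0 ≤ l1 b := by simp [l1_eq_norm]
  rw [DML1_eq_of_nonneg (fun i => (ha i).1) (fun i => (hc i).1) (by positivity),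
    DML1_eq_of_nonneg (fun i => (ha i).1) (fun i => (hb i).1) (by positivity),
    DML1_eq_of_nonneg (fun i => (hb i).1) (fun i => (hc i).1) (by positivity)]
  simp only [l1_eq_norm, WithLp.toLp_sub] at hA hB hC ⊢
  refine div_le_goldenRatio_mul_div_add_div hA hB hC (norm_nonneg _) (norm_nonneg _) ?_ ?_
    (norm_sub_le_norm_sub_add_norm_sub _ _ _) (norm_sub_le _ _)
  · exact (norm_sub_norm_le _ _).trans_eq (norm_sub_rev _ _)
  · exact norm_sub_norm_le _ _

/-- The relaxed triangle inequality for the first Dice semimetric loss with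
`ρ = (1 + √5)/2` (part of Theorem 1). -/
theorem dml1_relaxed_triangle {p : ℕ} (hp : 1 ≤ p) (a b c : Fin p → ℝ)
    (ha : ∀ i, 0 ≤ a i ∧ a i ≤ 1) (hb : ∀ i, 0 ≤ b i ∧ b i ≤ 1)
    (hc : ∀ i, 0 ≤ c i ∧ c i ≤ 1)
    (ha0 : a ≠ 0) (hb0 : b ≠ 0) (hc0 : c ≠ 0) :
    DML1 a c ≤ (1 + Real.sqrt 5) / 2 * (DML1 a b + DML1 b c) :=
  dml1_relaxed_triangle_general a b c ha hb hc ha0 hc0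
end

section
/- Let A be a set and let d : A × A → ℝ satisfy 0 ≤ d(a,b) ≤ 1 for all a, b ∈ A and the triangle inequality d(a,c) ≤ d(a,b) + d(b,c) for all a, b, c ∈ A. Then the function g(a,b) = d(a,b)/(2 − d(a,b)) satisfies the relaxed triangle inequality g(a,c) ≤ ρ (g(a,b) + g(b,c)) for all a, b, c ∈ A with ρ = (1 + √5)/2. -/
lemma key_transform (x y z s : ℝ) (hx0 : 0 ≤ x) (hx1 : x ≤ 1) (hy0 : 0 ≤ y) (hy1 : y ≤ 1)
    (hz0 : 0 ≤ z) (hz1 : z ≤ 1) (hzxy : z ≤ x + y) (hs : s^2 = 5) (hs2 : 2 ≤ s) :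
    z / (2 - z) ≤ (1 + s) / 2 * (x / (2 - x) + y / (2 - y)) := by
  have h2x : (0:ℝ) < 2 - x := by linarith
  have h2y : (0:ℝ) < 2 - y := by linarith
  have h2z : (0:ℝ) < 2 - z := by linarith
  rw [div_add_div _ _ (ne_of_gt h2x) (ne_of_gt h2y), ← mul_div_assoc,
    div_le_div_iff₀ h2z (by positivity)]
  nlinarith [mul_nonneg hx0 hy0, sq_nonneg (x+y-z), mul_nonneg (mul_nonneg hx0 hy0) hz0,
    sq_nonneg (x-y), mul_nonneg hx0 hz0, mul_nonneg hy0 hz0,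
    mul_nonneg (sub_nonneg.2 hz1) (mul_nonneg hx0 hy0),
    mul_nonneg (sub_nonneg.2 hx1) hy0, mul_nonneg hx0 (sub_nonneg.2 hy1),
    sq_nonneg (s-2), mul_pos h2x h2y]

/-- Core content of the proof of Theorem 1: if `d` takes values in `[0,1]` and
satisfies the triangle inequality, then `g = d / (2 - d)` satisfies the
`ρ`-relaxed triangle inequality with `ρ = (1 + √5)/2`. -/
theorem transform_relaxed_triangle {A : Type*} (d : A × A → ℝ)
    (hd01 : ∀ a b : A, 0 ≤ d (a, b) ∧ d (a, b) ≤ 1)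
    (htri : ∀ a b c : A, d (a, c) ≤ d (a, b) + d (b, c))
    (g : A × A → ℝ) (hg : ∀ a b : A, g (a, b) = d (a, b) / (2 - d (a, b))) :
    ∀ a b c : A, g (a, c) ≤ (1 + Real.sqrt 5) / 2 * (g (a, b) + g (b, c)) := by
  intro a b c
  rw [hg a c, hg a b, hg b c]
  exact key_transform _ _ _ _ (hd01 a b).1 (hd01 a b).2 (hd01 b c).1 (hd01 b c).2
    (hd01 a c).1 (hd01 a c).2 (htri a b c)
    (Real.sq_sqrt (by norm_num))
    (by nlinarith [Real.sq_sqrt (show (0:ℝ) ≤ 5 by norm_num), Real.sqrt_nonneg 5])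
end

section
/- Let p = 2 and set a = (0,1), b = (1,1), c = (1,0) in [0,1]². Then Δ_DML1(a,c) = 1 and Δ_DML1(a,b) = Δ_DML1(b,c) = 1/3. Consequently, any constant ρ such that Δ_DML1(x,z) ≤ ρ (Δ_DML1(x,y) + Δ_DML1(y,z)) for all nonzero x, y, z ∈ [0,1]² must satisfy ρ ≥ 3/2. -/
open Finset

/-- The example `a = (0,1)`, `b = (1,1)`, `c = (1,0)` shows that the relaxation
constant `ρ` of the first Dice semimetric loss must be at least `3/2`. -/
theorem dml1_rho_lower_bound :
    DML1 (![0, 1] : Fin 2 → ℝ) ![1, 0] = 1 ∧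
    DML1 (![0, 1] : Fin 2 → ℝ) ![1, 1] = 1 / 3 ∧
    DML1 (![1, 1] : Fin 2 → ℝ) ![1, 0] = 1 / 3 ∧
    ∀ ρ : ℝ,
      (∀ x y z : Fin 2 → ℝ, (∀ i, 0 ≤ x i ∧ x i ≤ 1) → (∀ i, 0 ≤ y i ∧ y i ≤ 1) →
        (∀ i, 0 ≤ z i ∧ z i ≤ 1) → x ≠ 0 → y ≠ 0 → z ≠ 0 →
        DML1 x z ≤ ρ * (DML1 x y + DML1 y z)) →
      3 / 2 ≤ ρ := by

  have h1 : DML1 (![0, 1] : Fin 2 → ℝ) ![1, 0] = 1 := by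
    simp [DML1, l1, Fin.sum_univ_two]
  have h2 : DML1 (![0, 1] : Fin 2 → ℝ) ![1, 1] = 1 / 3 := by
    simp [DML1, l1, Fin.sum_univ_two]
    norm_num
  have h3 : DML1 (![1, 1] : Fin 2 → ℝ) ![1, 0] = 1 / 3 := by
    simp [DML1, l1, Fin.sum_univ_two]
    norm_num
  refine ⟨h1, h2, h3, fun ρ h => ?_⟩
  have key := h ![0,1] ![1,1] ![1,0]
    (by intro i; fin_cases i <;> norm_num)
    (by intro i; fin_cases i <;> norm_num)
    (by intro i; fin_cases i <;> norm_num)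
    (by intro hc; have := congrFun hc 1; norm_num at this)
    (by intro hc; have := congrFun hc 1; norm_num at this)
    (by intro hc; have := congrFun hc 0; norm_num at this)
  rw [h1, h2, h3] at key
  linarith
end

section
/- There exist p ≥ 1 and x, y ∈ [0,1]^p with x + y ≠ 0 such that Δ_SDL(x,y) ≠ Δ_DML1(x,y), and there exist p ≥ 1 and x, y ∈ [0,1]^p with x + y ≠ 0 such that Δ_DML1(x,y) ≠ Δ_DML2(x,y). (For instance, with p = 1, x = 1/2, y = 1/2 gives Δ_SDL = 1/2 while Δ_DML1 = 0; and x = 1/2, y = 1/4 gives Δ_DML1 = 1/3 while Δ_DML2 = 1/2.) -/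
open Finset

/-- The soft Dice loss. -/
noncomputable def SDL {p : ℕ} (x y : Fin p → ℝ) : ℝ :=
  1 - 2 * (∑ i, x i * y i) / (l1 x + l1 y)

/-! On constant vectors all three losses collapse to formulas in the two common values `a`, `b`,
independently of the dimension. The soft Dice loss sees the product `a * b`, whereas
`|a + b| - |a - b| = 2 * min a b` in `DML1`, so the two separate at `a = b = 1 / 2`;
`DML2` sees `a * b` again and separates from `DML1` at `a = 1 / 2`, `b = 1 / 4`. -/

section ConstantVectors

variable {p : ℕ}

lemma l1_const (c : ℝ) : l1 (fun _ : Fin p => c) = p * |c| := by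
  simp [l1]

lemma SDL_const (hp : p ≠ 0) (a b : ℝ) :
    SDL (fun _ : Fin p => a) (fun _ => b) = 1 - 2 * (a * b) / (|a| + |b|) := by
  have hp' : (p : ℝ) ≠ 0 := Nat.cast_ne_zero.mpr hp
  simp only [SDL, l1_const, sum_const, card_fin, nsmul_eq_mul]
  rw [← mul_add, mul_left_comm, mul_div_mul_left _ _ hp']

lemma DML1_const (hp : p ≠ 0) (a b : ℝ) :
    DML1 (fun _ : Fin p => a) (fun _ => b) = 1 - (|a + b| - |a - b|) / |a + b| := by
  have hp' : (p : ℝ) ≠ 0 := Nat.cast_ne_zero.mpr hp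
  rw [DML1, Pi.add_def, Pi.sub_def, l1_const, l1_const, ← mul_sub, mul_div_mul_left _ _ hp']

lemma DML2_const (hp : p ≠ 0) (a b : ℝ) :
    DML2 (fun _ : Fin p => a) (fun _ => b) = 1 - 2 * |a * b| / (2 * |a * b| + |a - b|) := by
  have hp' : (p : ℝ) ≠ 0 := Nat.cast_ne_zero.mpr hp
  rw [DML2, Pi.mul_def, Pi.sub_def, l1_const, l1_const, mul_left_comm,
    ← mul_add, mul_div_mul_left _ _ hp']

lemma const_add_const_ne_zero {ι : Type*} [Nonempty ι] {a b : ℝ} (h : a + b ≠ 0) :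
    (fun _ : ι => a) + (fun _ => b) ≠ 0 := fun h0 =>
  h (congrFun h0 (Classical.arbitrary ι))

end ConstantVectors

/-- Theorem 2 (second half): on soft labels the soft Dice loss can differ from
the first Dice semimetric loss, and the two Dice semimetric losses can differ. -/
theorem sdl_dml_differ_on_soft_labels :
    (∃ p : ℕ, 1 ≤ p ∧ ∃ x y : Fin p → ℝ,
      (∀ i, 0 ≤ x i ∧ x i ≤ 1) ∧ (∀ i, 0 ≤ y i ∧ y i ≤ 1) ∧ x + y ≠ 0 ∧
      SDL x y ≠ DML1 x y) ∧
    (∃ p : ℕ, 1 ≤ p ∧ ∃ x y : Fin p → ℝ,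
      (∀ i, 0 ≤ x i ∧ x i ≤ 1) ∧ (∀ i, 0 ≤ y i ∧ y i ≤ 1) ∧ x + y ≠ 0 ∧
      DML1 x y ≠ DML2 x y) := by
  refine ⟨⟨1, le_rfl, fun _ => 1 / 2, fun _ => 1 / 2, fun _ => by norm_num, fun _ => by norm_num,
      const_add_const_ne_zero (by norm_num), ?_⟩,
    ⟨1, le_rfl, fun _ => 1 / 2, fun _ => 1 / 4, fun _ => by norm_num, fun _ => by norm_num,
      const_add_const_ne_zero (by norm_num), ?_⟩⟩
  · rw [SDL_const one_ne_zero, DML1_const one_ne_zero]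
    norm_num
  · rw [DML1_const one_ne_zero, DML2_const one_ne_zero]
    norm_num
end
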